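/- The Euclidean Cauchy kernel G(x) = x/‖x‖^n, viewed as a Cl_n-valued function on R^n \ {0}, is left monogenic: DG = 0 on R^n \ {0}, where D = Σ_j e_j ∂/∂x_j. -/

import Mathlib

open scoped RealInnerProductSpace


/-- The Euclidean Cauchy kernel `G(x) = x/‖x‖ⁿ`, viewed as a Clifford-algebra
valued function on `ℝⁿ \ {0}`, is left monogenic: `DG = 0` away from the
origin.  The Clifford algebra is realized as a normed algebra `A` with an
embedding `ι` satisfying `ι v * ι v = -‖v‖²`. -/
theorem cauchy_kernel_left_monogenic (n : ℕ) (hn : 2 ≤ n) (A : Type*)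
    [NormedRing A] [NormedAlgebra ℝ A]
    (ι : EuclideanSpace ℝ (Fin n) →L[ℝ] A)
    (hι : ∀ v : EuclideanSpace ℝ (Fin n),
      ι v * ι v = algebraMap ℝ A (-‖v‖ ^ 2))
    (G : EuclideanSpace ℝ (Fin n) → A)
    (hG : ∀ z : EuclideanSpace ℝ (Fin n), G z = (‖z‖ ^ (n : ℝ))⁻¹ • ι z)
    (x : EuclideanSpace ℝ (Fin n)) (hx : x ≠ 0) :
    ∑ j : Fin n,
      ι (EuclideanSpace.single j (1 : ℝ)) *
        fderiv ℝ G x (EuclideanSpace.single j (1 : ℝ)) = 0 := by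
  have hxn : ‖x‖ ≠ 0 := norm_ne_zero_iff.mpr hx
  have hp : (1:ℝ) < (n:ℝ) := by exact_mod_cast lt_of_lt_of_le one_lt_two hn
  have hne : ‖x‖ ^ (n:ℝ) ≠ 0 := by positivity
  -- derivative of z ↦ ‖z‖^n
  have h1 : HasFDerivAt (fun z : EuclideanSpace ℝ (Fin n) => ‖z‖ ^ (n:ℝ))
      ((((n:ℝ)) * ‖x‖ ^ ((n:ℝ) - 2)) • innerSL ℝ x) x := hasFDerivAt_norm_rpow x hp
  -- derivative of z ↦ (‖z‖^n)⁻¹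
  have h2 : HasFDerivAt (fun z : EuclideanSpace ℝ (Fin n) => (‖z‖ ^ (n:ℝ))⁻¹)
      ((-((‖x‖ ^ (n:ℝ)) ^ 2)⁻¹) • (((n:ℝ) * ‖x‖ ^ ((n:ℝ) - 2)) • innerSL ℝ x)) x :=
    (hasDerivAt_inv hne).comp_hasFDerivAt x h1
  have hf : HasFDerivAt G
      ((‖x‖ ^ (n:ℝ))⁻¹ • (ι : EuclideanSpace ℝ (Fin n) →L[ℝ] A)
        + ((-((‖x‖ ^ (n:ℝ)) ^ 2)⁻¹) • (((n:ℝ) * ‖x‖ ^ ((n:ℝ) - 2)) • innerSL ℝ x)).smulRight (ι x)) x := by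
    have := h2.smul (ι.hasFDerivAt (x := x))
    rw [funext hG]
    exact this
  rw [hf.fderiv]
  set c : ℝ := (-((‖x‖ ^ (n:ℝ)) ^ 2)⁻¹) * ((n:ℝ) * ‖x‖ ^ ((n:ℝ) - 2)) with hc
  have key : ∀ j : Fin n,
      ι (EuclideanSpace.single j (1 : ℝ)) *
        (((‖x‖ ^ (n:ℝ))⁻¹ • (ι : EuclideanSpace ℝ (Fin n) →L[ℝ] A)
        + ((-((‖x‖ ^ (n:ℝ)) ^ 2)⁻¹) • (((n:ℝ) * ‖x‖ ^ ((n:ℝ) - 2)) • innerSL ℝ x)).smulRight (ι x))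
          (EuclideanSpace.single j (1 : ℝ)))
      = (‖x‖ ^ (n:ℝ))⁻¹ • (ι (EuclideanSpace.single j (1:ℝ)) * ι (EuclideanSpace.single j (1:ℝ)))
        + (c * x j) • (ι (EuclideanSpace.single j (1:ℝ)) * ι x) := by
    intro j
    have hin : ⟪x, EuclideanSpace.single j (1:ℝ)⟫ = x j := by
      simp [EuclideanSpace.inner_single_right]
    simp only [ContinuousLinearMap.add_apply, ContinuousLinearMap.smul_apply,
      ContinuousLinearMap.smulRight_apply, innerSL_apply_apply, hc]
    rw [mul_add]
    congr 1
    · rw [mul_smul_comm]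
    · rw [mul_smul_comm]
      congr 1
      simp only [ContinuousLinearMap.smul_apply, innerSL_apply_apply, hin, smul_smul,
        smul_eq_mul]
      ring
  rw [Finset.sum_congr rfl (fun j _ => key j)]
  rw [Finset.sum_add_distrib, ← Finset.smul_sum]
  have hsum1 : ∑ j : Fin n, (ι (EuclideanSpace.single j (1:ℝ)) * ι (EuclideanSpace.single j (1:ℝ)))
      = algebraMap ℝ A (-(n:ℝ)) := by
    simp only [hι, EuclideanSpace.norm_single, norm_one, one_pow]
    simp [Finset.sum_const]
  have hbasis : (∑ j : Fin n, (x j) • EuclideanSpace.single j (1 : ℝ)) = x := by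
    ext i
    rw [show ((∑ j : Fin n, (x j) • EuclideanSpace.single j (1 : ℝ)) i)
        = ∑ j : Fin n, ((x j) • EuclideanSpace.single j (1 : ℝ)) i from
        by rw [WithLp.ofLp_sum, Finset.sum_apply]]
    simp [EuclideanSpace.single_apply]
  have hxsum : ∑ j : Fin n, (x j) • ι (EuclideanSpace.single j (1:ℝ)) = ι x := by
    rw [← hbasis, map_sum]
    simp [hbasis]
  have hsum2 : ∑ j : Fin n, (c * x j) • (ι (EuclideanSpace.single j (1:ℝ)) * ι x)
      = c • (ι x * ι x) := by
    calc ∑ j : Fin n, (c * x j) • (ι (EuclideanSpace.single j (1:ℝ)) * ι x)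
        = ∑ j : Fin n, c • (((x j) • ι (EuclideanSpace.single j (1:ℝ))) * ι x) := by
          simp_rw [mul_smul, smul_mul_assoc]
      _ = c • ((∑ j : Fin n, (x j) • ι (EuclideanSpace.single j (1:ℝ))) * ι x) := by
          rw [← Finset.smul_sum, Finset.sum_mul]
      _ = c • (ι x * ι x) := by rw [hxsum]
  rw [hsum1, hsum2, hι x]
  rw [Algebra.smul_def, Algebra.smul_def, ← map_mul, ← map_mul, ← map_add]
  rw [show (‖x‖ ^ (n:ℝ))⁻¹ * -(n:ℝ) + c * -‖x‖ ^ 2 = 0 from ?_, map_zero]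
  have e1 : ‖x‖ ^ ((n:ℝ)-2) * ‖x‖ ^ 2 = ‖x‖ ^ (n:ℝ) := by
    rw [show ‖x‖ ^ 2 = ‖x‖ ^ (2:ℝ) by rw [Real.rpow_two],
      ← Real.rpow_add (norm_pos_iff.mpr hx)]
    ring_nf
  rw [hc]
  have e2 : ‖x‖ ^ n = ‖x‖ ^ (n:ℝ) := (Real.rpow_natCast _ n).symm
  have e3 : ‖x‖ ^ (n*2) = (‖x‖ ^ (n:ℝ))^2 := by rw [pow_mul, e2]
  field_simp
  linear_combination (n:ℝ) * e1
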